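/- For α ∈ (1/2, 1) and κ > 0, the integral ∫_0^∞ √t · G(κ t^{α - 1/2}) dt is finite and bounded above by (2/(2α-1))·κ^{-3/(2α-1)}·∫_0^∞ v^{(6-6α)/(2α-1)} φ(v) dv, which is a finite constant. -/

import Mathlib

/-!
For `x > 0` the loss function satisfies `0 ≤ G x ≤ φ(x) / x²`. Both bounds are the Mills-ratio
estimates `(1/x - 1/x³) φ(x) ≤ 1 - Φ(x) ≤ φ(x) / x`, obtained by comparing
`1 - Φ(x) = ∫_x^∞ φ` with the integrals of the derivatives of `φ(t) / t` and `(1/t - 1/t³) φ(t)`.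
So the integrand is dominated by `√t φ(κ t^b) / (κ t^b)²` with `b = α - 1/2`, and the substitution
`v = κ t^b` turns the integral of this majorant into exactly
`b⁻¹ κ^(-3/(2b)) ∫_0^∞ v^(3/(2b) - 3) φ(v) dv`, which is finite since `3/(2b) - 3 > -1`
when `b < 3/4`.
-/

open MeasureTheory

noncomputable def phi (x : ℝ) : ℝ := (Real.sqrt (2 * Real.pi))⁻¹ * Real.exp (-x ^ 2 / 2)

noncomputable def Phi (x : ℝ) : ℝ := ∫ t in Set.Iic x, phi t

noncomputable def G (x : ℝ) : ℝ := phi x - x * (1 - Phi x)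

open Real Set Filter Topology

theorem Real.rpow_sub_one_mul_rpow_rpow {t : ℝ} (ht : 0 < t) (s : ℝ) {b : ℝ} (hb : b ≠ 0) :
    t ^ (b - 1) * (t ^ b) ^ ((s + 1) / b - 1) = t ^ s := by
  rw [← rpow_mul ht.le, ← rpow_add ht]
  congr 1
  field_simp
  ring

theorem Real.rpow_mul_div_sq {v : ℝ} (hv : 0 < v) (p a : ℝ) :
    v ^ p * (a / v ^ 2) = v ^ (p - 2) * a := by
  rw [rpow_sub hv, rpow_two]
  field_simp

theorem integrableOn_Ioi_rpow_mul_comp_rpow_iff (h : ℝ → ℝ) (s : ℝ) {b : ℝ} (hb : b ≠ 0) :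
    IntegrableOn (fun t => t ^ s * h (t ^ b)) (Ioi 0) ↔
      IntegrableOn (fun u => u ^ ((s + 1) / b - 1) * h u) (Ioi 0) := by
  rw [← integrableOn_Ioi_comp_rpow_iff' (fun u => u ^ ((s + 1) / b - 1) * h u) hb]
  refine integrableOn_congr_fun (fun t (ht : 0 < t) => ?_) measurableSet_Ioi
  rw [smul_eq_mul, ← mul_assoc, rpow_sub_one_mul_rpow_rpow ht s hb]

theorem integral_Ioi_rpow_mul_comp_rpow (h : ℝ → ℝ) (s : ℝ) {b : ℝ} (hb : b ≠ 0) :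
    ∫ t in Ioi 0, t ^ s * h (t ^ b) = |b|⁻¹ * ∫ u in Ioi 0, u ^ ((s + 1) / b - 1) * h u := by
  rw [← integral_comp_rpow_Ioi (fun u => u ^ ((s + 1) / b - 1) * h u) hb,
    eq_inv_mul_iff_mul_eq₀ (abs_ne_zero.2 hb), ← integral_const_mul]
  refine setIntegral_congr_fun measurableSet_Ioi (fun t (ht : 0 < t) => ?_)
  rw [smul_eq_mul, mul_assoc, ← mul_assoc (t ^ (b - 1)), rpow_sub_one_mul_rpow_rpow ht s hb]

theorem integrableOn_Ioi_rpow_mul_comp_mul_left_iff (h : ℝ → ℝ) (c : ℝ) {κ : ℝ} (hκ : 0 < κ) :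
    IntegrableOn (fun u => u ^ c * h (κ * u)) (Ioi 0) ↔
      IntegrableOn (fun v => v ^ c * h v) (Ioi 0) := by
  have hscale := integrableOn_Ioi_comp_mul_left_iff (fun v => v ^ c * h v) 0 hκ
  rw [mul_zero] at hscale
  rw [← hscale, IntegrableOn, ← integrable_const_mul_iff (rpow_pos_of_pos hκ c).ne'.isUnit]
  refine integrableOn_congr_fun (fun u (hu : 0 < u) => ?_) measurableSet_Ioi
  rw [mul_rpow hκ.le hu.le, mul_assoc]

theorem integral_Ioi_rpow_mul_comp_mul_left (h : ℝ → ℝ) (c : ℝ) {κ : ℝ} (hκ : 0 < κ) :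
    ∫ u in Ioi 0, u ^ c * h (κ * u) = κ ^ (-(c + 1)) * ∫ v in Ioi 0, v ^ c * h v := by
  have hscale := integral_comp_mul_left_Ioi (fun v => v ^ c * h v) 0 hκ
  rw [mul_zero, smul_eq_mul] at hscale
  calc ∫ u in Ioi 0, u ^ c * h (κ * u)
      = κ ^ (-c) * ∫ u in Ioi 0, (κ * u) ^ c * h (κ * u) := by
        rw [← integral_const_mul]
        refine setIntegral_congr_fun measurableSet_Ioi (fun u (hu : 0 < u) => ?_)
        rw [mul_rpow hκ.le hu.le, rpow_neg hκ.le]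
        field_simp
    _ = κ ^ (-(c + 1)) * ∫ v in Ioi 0, v ^ c * h v := by
        rw [hscale, neg_add, rpow_add hκ, rpow_neg_one, mul_assoc]

theorem integrableOn_Ioi_rpow_mul_comp_mul_rpow_iff (h : ℝ → ℝ) (s : ℝ) {b κ : ℝ} (hb : b ≠ 0)
    (hκ : 0 < κ) :
    IntegrableOn (fun t => t ^ s * h (κ * t ^ b)) (Ioi 0) ↔
      IntegrableOn (fun v => v ^ ((s + 1) / b - 1) * h v) (Ioi 0) :=
  (integrableOn_Ioi_rpow_mul_comp_rpow_iff (fun u => h (κ * u)) s hb).trans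
    (integrableOn_Ioi_rpow_mul_comp_mul_left_iff h _ hκ)

theorem integral_Ioi_rpow_mul_comp_mul_rpow (h : ℝ → ℝ) (s : ℝ) {b κ : ℝ} (hb : b ≠ 0)
    (hκ : 0 < κ) :
    ∫ t in Ioi 0, t ^ s * h (κ * t ^ b) =
      |b|⁻¹ * κ ^ (-((s + 1) / b)) * ∫ v in Ioi 0, v ^ ((s + 1) / b - 1) * h v := by
  rw [integral_Ioi_rpow_mul_comp_rpow (fun u => h (κ * u)) s hb,
    integral_Ioi_rpow_mul_comp_mul_left h _ hκ, sub_add_cancel, mul_assoc]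

theorem setIntegral_Ioi_le_of_hasDerivAt {f f' g : ℝ → ℝ} {a : ℝ}
    (hderiv : ∀ x ∈ Ici a, HasDerivAt f (f' x) x) (hf' : IntegrableOn f' (Ioi a))
    (hf : Tendsto f atTop (𝓝 0)) (hg : IntegrableOn g (Ioi a))
    (hle : ∀ x ∈ Ioi a, g x ≤ -f' x) :
    ∫ x in Ioi a, g x ≤ f a := by
  calc ∫ x in Ioi a, g x ≤ ∫ x in Ioi a, -f' x :=
        setIntegral_mono_on hg hf'.neg measurableSet_Ioi hle
    _ = f a := by rw [integral_neg, integral_Ioi_of_hasDerivAt_of_tendsto' hderiv hf' hf]; ring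

theorem le_setIntegral_Ioi_of_hasDerivAt {f f' g : ℝ → ℝ} {a : ℝ}
    (hderiv : ∀ x ∈ Ici a, HasDerivAt f (f' x) x) (hf' : IntegrableOn f' (Ioi a))
    (hf : Tendsto f atTop (𝓝 0)) (hg : IntegrableOn g (Ioi a))
    (hle : ∀ x ∈ Ioi a, -f' x ≤ g x) :
    f a ≤ ∫ x in Ioi a, g x := by
  calc f a = ∫ x in Ioi a, -f' x := by
        rw [integral_neg, integral_Ioi_of_hasDerivAt_of_tendsto' hderiv hf' hf]; ring
    _ ≤ ∫ x in Ioi a, g x := setIntegral_mono_on hf'.neg hg measurableSet_Ioi hle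

lemma phi_pos (x : ℝ) : 0 < phi x := by unfold phi; positivity

lemma continuous_phi : Continuous phi := by unfold phi; fun_prop

lemma phi_eq_mul_exp_neg_mul_sq : phi = fun x => (√(2 * π))⁻¹ * exp (-(1 / 2) * x ^ 2) := by
  ext x; unfold phi; ring_nf

lemma integrable_phi : Integrable phi := by
  rw [phi_eq_mul_exp_neg_mul_sq]
  exact (integrable_exp_neg_mul_sq (by norm_num)).const_mul _

lemma integral_phi : ∫ x, phi x = 1 := by
  rw [phi_eq_mul_exp_neg_mul_sq, integral_const_mul, integral_gaussian,
    show π / (1 / 2) = 2 * π by ring]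
  exact inv_mul_cancel₀ (by positivity)

lemma integrableOn_rpow_mul_phi {s : ℝ} (hs : -1 < s) :
    IntegrableOn (fun v => v ^ s * phi v) (Ioi 0) := by
  simp_rw [phi_eq_mul_exp_neg_mul_sq, mul_left_comm _ (√(2 * π))⁻¹]
  exact (integrableOn_rpow_mul_exp_neg_mul_sq (by norm_num) hs).const_mul _

lemma hasDerivAt_phi (x : ℝ) : HasDerivAt phi (-x * phi x) x := by
  have h : HasDerivAt (fun y : ℝ => -y ^ 2 / 2) (-x) x :=
    ((hasDerivAt_pow 2 x).neg.div_const 2).congr_deriv (by ring)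
  exact (h.exp.const_mul _).congr_deriv (by unfold phi; ring)

lemma tendsto_phi_atTop : Tendsto phi atTop (𝓝 0) := by
  have h : Tendsto (fun x : ℝ => -x ^ 2 / 2) atTop atBot :=
    (tendsto_neg_atBot_iff.2 (tendsto_pow_atTop two_ne_zero)).atBot_div_const two_pos
  have := (tendsto_exp_atBot.comp h).const_mul (√(2 * π))⁻¹
  rwa [mul_zero] at this

lemma one_sub_Phi_eq (x : ℝ) : 1 - Phi x = ∫ t in Ioi x, phi t := by
  rw [← integral_phi, ← intervalIntegral.integral_Iic_add_Ioi integrable_phi.integrableOn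
    integrable_phi.integrableOn, Phi, add_sub_cancel_left]

lemma monotone_Phi : Monotone Phi := fun _ _ hxy =>
  setIntegral_mono_set integrable_phi.integrableOn
    (Eventually.of_forall fun t => (phi_pos t).le) (Iic_subset_Iic.2 hxy).eventuallyLE

lemma measurable_G : Measurable G := by
  have := monotone_Phi.measurable
  have := continuous_phi.measurable
  unfold G; fun_prop

lemma one_sub_Phi_le_phi_div {x : ℝ} (hx : 0 < x) : 1 - Phi x ≤ phi x / x := by
  have hderiv : ∀ t ∈ Ici x, HasDerivAt (fun t => phi t / t) (-(phi t + phi t / t ^ 2)) t :=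
    fun t ht => by
      have ht0 : t ≠ 0 := (hx.trans_le ht).ne'
      exact ((hasDerivAt_phi t).div (hasDerivAt_id t) ht0).congr_deriv
        (by simp only [id]; field_simp; ring)
  have hlim : Tendsto (fun t => phi t / t) atTop (𝓝 0) := by
    simpa only [mul_zero, ← div_eq_mul_inv] using tendsto_phi_atTop.mul tendsto_inv_atTop_zero
  have hnonpos : ∀ t ∈ Ioi x, -(phi t + phi t / t ^ 2) ≤ 0 := fun t _ => by
    have := phi_pos t
    simp only [neg_nonpos]; positivity
  rw [one_sub_Phi_eq]
  refine setIntegral_Ioi_le_of_hasDerivAt (f := fun t => phi t / t) hderiv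
    (integrableOn_Ioi_deriv_of_nonpos' hderiv hnonpos hlim) hlim integrable_phi.integrableOn
    fun t _ => ?_
  rw [neg_neg, le_add_iff_nonneg_right]
  exact div_nonneg (phi_pos t).le (sq_nonneg t)

lemma inv_sub_inv_pow_three_mul_phi_le_one_sub_Phi {x : ℝ} (hx : 0 < x) :
    (x⁻¹ - (x ^ 3)⁻¹) * phi x ≤ 1 - Phi x := by
  have hderiv : ∀ t ∈ Ici x,
      HasDerivAt (fun t => (t⁻¹ - (t ^ 3)⁻¹) * phi t) ((3 / t ^ 4 - 1) * phi t) t := by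
    intro t ht
    have ht0 : t ≠ 0 := (hx.trans_le ht).ne'
    exact (((hasDerivAt_inv ht0).sub ((hasDerivAt_pow 3 t).inv (pow_ne_zero 3 ht0))).mul
      (hasDerivAt_phi t)).congr_deriv (by simp only [Pi.sub_apply, Pi.inv_apply]; field_simp; ring)
  have hlim : Tendsto (fun t => (t⁻¹ - (t ^ 3)⁻¹) * phi t) atTop (𝓝 0) := by
    simpa only [sub_zero, zero_mul, Function.comp_def] using (tendsto_inv_atTop_zero.sub
      (tendsto_inv_atTop_zero.comp (tendsto_pow_atTop three_ne_zero))).mul tendsto_phi_atTop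
  have hint : IntegrableOn (fun t => (3 / t ^ 4 - 1) * phi t) (Ioi x) := by
    refine integrable_phi.integrableOn.bdd_mul (c := 3 / x ^ 4 + 1)
      (by fun_prop : Measurable fun t : ℝ => 3 / t ^ 4 - 1).aestronglyMeasurable ?_
    filter_upwards [ae_restrict_mem measurableSet_Ioi] with t (ht : x < t)
    have ht0 : 0 < t := hx.trans ht
    have : 3 / t ^ 4 ≤ 3 / x ^ 4 := by gcongr
    rw [norm_eq_abs, abs_le]
    constructor <;> nlinarith [show 0 < 3 / t ^ 4 by positivity, show 0 < 3 / x ^ 4 by positivity]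
  rw [one_sub_Phi_eq]
  refine le_setIntegral_Ioi_of_hasDerivAt hderiv hint hlim integrable_phi.integrableOn
    fun t (ht : x < t) => ?_
  have : 0 < 3 / t ^ 4 * phi t := by have := phi_pos t; have := hx.trans ht; positivity
  linarith

lemma G_nonneg (x : ℝ) : 0 ≤ G x := by
  unfold G
  rcases le_or_gt x 0 with hx | hx
  · have : 0 ≤ 1 - Phi x := one_sub_Phi_eq x ▸
      setIntegral_nonneg measurableSet_Ioi fun t _ => (phi_pos t).le
    nlinarith [phi_pos x]
  · have := mul_le_mul_of_nonneg_left (one_sub_Phi_le_phi_div hx) hx.le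
    rw [mul_div_cancel₀ _ hx.ne'] at this
    linarith

lemma G_le_phi_div_sq {x : ℝ} (hx : 0 < x) : G x ≤ phi x / x ^ 2 := by
  have := mul_le_mul_of_nonneg_left (inv_sub_inv_pow_three_mul_phi_le_one_sub_Phi hx) hx.le
  have e : x * ((x⁻¹ - (x ^ 3)⁻¹) * phi x) = phi x - phi x / x ^ 2 := by field_simp
  unfold G
  linarith

section Majorant

variable {b κ : ℝ}

lemma sqrt_mul_G_comp_le (hκ : 0 < κ) {t : ℝ} (ht : 0 < t) :
    √t * G (κ * t ^ b) ≤ t ^ (1 / 2 : ℝ) * (phi (κ * t ^ b) / (κ * t ^ b) ^ 2) := by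
  rw [← sqrt_eq_rpow]
  exact mul_le_mul_of_nonneg_left (G_le_phi_div_sq (by positivity)) (sqrt_nonneg t)

lemma integrableOn_rpow_mul_phi_div_sq_comp (hb₀ : 0 < b) (hb : b < 3 / 4) (hκ : 0 < κ) :
    IntegrableOn (fun t => t ^ (1 / 2 : ℝ) * (phi (κ * t ^ b) / (κ * t ^ b) ^ 2)) (Ioi 0) := by
  refine (integrableOn_Ioi_rpow_mul_comp_mul_rpow_iff (fun v => phi v / v ^ 2) _ hb₀.ne' hκ).2 ?_
  refine (integrableOn_congr_fun (fun v (hv : 0 < v) => rpow_mul_div_sq hv _ _)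
    measurableSet_Ioi).2 (integrableOn_rpow_mul_phi ?_)
  rw [show (1 / 2 + 1) / b - 1 - 2 = 3 / (2 * b) - 3 by ring, lt_sub_iff_add_lt,
    lt_div_iff₀ (by positivity)]
  linarith

lemma integral_rpow_mul_phi_div_sq_comp (hb : b ≠ 0) (hκ : 0 < κ) :
    ∫ t in Ioi 0, t ^ (1 / 2 : ℝ) * (phi (κ * t ^ b) / (κ * t ^ b) ^ 2) =
      |b|⁻¹ * κ ^ (-(3 / (2 * b))) * ∫ v in Ioi 0, v ^ (3 / (2 * b) - 3) * phi v := by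
  rw [integral_Ioi_rpow_mul_comp_mul_rpow (fun v => phi v / v ^ 2) _ hb hκ,
    setIntegral_congr_fun measurableSet_Ioi (fun v (hv : 0 < v) => rpow_mul_div_sq hv _ _)]
  ring_nf

lemma integrableOn_sqrt_mul_G_comp (hb₀ : 0 < b) (hb : b < 3 / 4) (hκ : 0 < κ) :
    IntegrableOn (fun t => √t * G (κ * t ^ b)) (Ioi 0) := by
  have := measurable_G
  refine (integrableOn_rpow_mul_phi_div_sq_comp hb₀ hb hκ).mono' (by fun_prop) ?_
  filter_upwards [ae_restrict_mem measurableSet_Ioi] with t (ht : 0 < t)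
  rw [norm_of_nonneg (mul_nonneg (sqrt_nonneg t) (G_nonneg _))]
  exact sqrt_mul_G_comp_le hκ ht

lemma integral_sqrt_mul_G_comp_le (hb₀ : 0 < b) (hb : b < 3 / 4) (hκ : 0 < κ) :
    ∫ t in Ioi 0, √t * G (κ * t ^ b) ≤
      b⁻¹ * κ ^ (-(3 / (2 * b))) * ∫ v in Ioi 0, v ^ (3 / (2 * b) - 3) * phi v := by
  refine (setIntegral_mono_on (integrableOn_sqrt_mul_G_comp hb₀ hb hκ)
    (integrableOn_rpow_mul_phi_div_sq_comp hb₀ hb hκ) measurableSet_Ioi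
    fun t ht => sqrt_mul_G_comp_le hκ ht).trans_eq ?_
  rw [integral_rpow_mul_phi_div_sq_comp hb₀.ne' hκ, abs_of_pos hb₀]

end Majorant

/-- For `α ∈ (1/2, 1)` and `κ > 0`, the integral `∫_0^∞ √t G(κ t^{α-1/2}) dt`
is finite and bounded by `(2/(2α-1)) κ^{-3/(2α-1)} ∫_0^∞ v^{(6-6α)/(2α-1)} φ(v) dv`,
which is itself finite. -/
theorem integral_loss_bound (α κ : ℝ) (hα : α ∈ Set.Ioo (1/2 : ℝ) 1) (hκ : 0 < κ) :
    IntegrableOn (fun t : ℝ => Real.sqrt t * G (κ * t ^ (α - 1/2))) (Set.Ioi 0) ∧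
      IntegrableOn (fun v : ℝ => v ^ ((6 - 6 * α) / (2 * α - 1)) * phi v) (Set.Ioi 0) ∧
      ∫ t in Set.Ioi (0 : ℝ), Real.sqrt t * G (κ * t ^ (α - 1/2))
        ≤ (2 / (2 * α - 1)) * κ ^ (-3 / (2 * α - 1))
          * ∫ v in Set.Ioi (0 : ℝ), v ^ ((6 - 6 * α) / (2 * α - 1)) * phi v := by
  obtain ⟨hα₁, hα₂⟩ := hα
  have hb₀ : 0 < α - 1 / 2 := by linarith
  have hb : α - 1 / 2 < 3 / 4 := by linarith
  have h2α : 2 * α - 1 ≠ 0 := by linarith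
  have hp : 3 / (2 * (α - 1 / 2)) = 3 / (2 * α - 1) := by ring_nf
  have hq : 3 / (2 * α - 1) - 3 = (6 - 6 * α) / (2 * α - 1) := by field_simp; ring
  have hinv : (α - 1 / 2)⁻¹ = 2 / (2 * α - 1) := by field_simp
  have hbound := integral_sqrt_mul_G_comp_le hb₀ hb hκ
  rw [hp, hq, hinv, ← neg_div] at hbound
  refine ⟨integrableOn_sqrt_mul_G_comp hb₀ hb hκ, integrableOn_rpow_mul_phi ?_, hbound⟩
  rw [← hq, lt_sub_iff_add_lt, lt_div_iff₀ (by linarith)]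
  linarith
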